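/- For w ∈ [−1/3, 1], the Werner state ρ_w is separable if and only if w ≤ 1/3. -/

import Mathlib

open Matrix
open scoped Kronecker ComplexOrder

def pairToFin4 (p : Fin 2 × Fin 2) : Fin 4 := ⟨2 * p.1.val + p.2.val, by omega⟩

/-- The Werner state `ρ_w`, indexed by `Fin 2 × Fin 2` in the basis order
`(0,0), (0,1), (1,0), (1,1)`. -/
noncomputable def wernerState (w : ℝ) : Matrix (Fin 2 × Fin 2) (Fin 2 × Fin 2) ℂ :=
  fun p q =>
    !![(((1 - w) / 4 : ℝ) : ℂ), 0, 0, 0;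
       0, (((1 + w) / 4 : ℝ) : ℂ), ((-(w / 2) : ℝ) : ℂ), 0;
       0, ((-(w / 2) : ℝ) : ℂ), (((1 + w) / 4 : ℝ) : ℂ), 0;
       0, 0, 0, (((1 - w) / 4 : ℝ) : ℂ)] (pairToFin4 p) (pairToFin4 q)

def IsDensityMatrix {n : Type*} [Fintype n] [DecidableEq n] (ρ : Matrix n n ℂ) : Prop :=
  ρ.PosSemidef ∧ ρ.trace = 1

/-- A bipartite density matrix is separable if it is a finite convex combination of
Kronecker products of density matrices. -/
def IsSeparableState {m n : ℕ} (ρ : Matrix (Fin m × Fin n) (Fin m × Fin n) ℂ) : Prop :=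
  ∃ (k : ℕ) (p : Fin k → ℝ) (σ : Fin k → Matrix (Fin m) (Fin m) ℂ)
    (τ : Fin k → Matrix (Fin n) (Fin n) ℂ),
    (∀ i, 0 ≤ p i) ∧ (∑ i, p i = 1) ∧
    (∀ i, IsDensityMatrix (σ i)) ∧ (∀ i, IsDensityMatrix (τ i)) ∧
    ρ = ∑ i, (p i : ℂ) • (σ i ⊗ₖ τ i)

/-!
The swap operator `F` satisfies `tr((σ ⊗ τ) F) = tr(σ τ) ≥ 0` for positive semidefinite `σ, τ`,
so `ρ ↦ tr(ρ F)` is nonnegative on separable states, while `tr(ρ_w F) = (1 - 3w)/2`.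
Conversely, in Pauli form `ρ_w = (I ⊗ I - w ∑ᵢ σᵢ ⊗ σᵢ) / 4`, and for `|w| ≤ 1/3` this is the
uniform average of the product states `ρ(r) ⊗ ρ(-3w r)` over the six Bloch vectors `r = ±eᵢ`.
-/

open scoped MatrixOrder Matrix.Norms.L2Operator in
theorem Matrix.PosSemidef.trace_mul_nonneg {n 𝕜 : Type*} [Fintype n] [DecidableEq n] [RCLike 𝕜]
    {A B : Matrix n n 𝕜} (hA : A.PosSemidef) (hB : B.PosSemidef) : 0 ≤ (A * B).trace := by
  obtain ⟨C, rfl⟩ := CStarAlgebra.nonneg_iff_eq_star_mul_self.mp hA.nonneg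
  rw [star_eq_conjTranspose, Matrix.mul_assoc, trace_mul_comm]
  exact (hB.mul_mul_conjTranspose_same C).trace_nonneg

/-- `tr(ρ F)`, where `F (a, b) = (b, a)` is the swap operator. -/
def swapTrace {ι R : Type*} [Fintype ι] [AddCommMonoid R] (ρ : Matrix (ι × ι) (ι × ι) R) : R :=
  ∑ a, ∑ b, ρ (a, b) (b, a)

theorem swapTrace_kronecker {ι R : Type*} [Fintype ι] [CommSemiring R] (A B : Matrix ι ι R) :
    swapTrace (A ⊗ₖ B) = (A * B).trace := by
  simp [swapTrace, trace, mul_apply]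

theorem IsSeparableState.swapTrace_nonneg {n : ℕ} {ρ : Matrix (Fin n × Fin n) (Fin n × Fin n) ℂ}
    (hρ : IsSeparableState ρ) : 0 ≤ swapTrace ρ := by
  obtain ⟨k, p, σ, τ, hp, -, hσ, hτ, rfl⟩ := hρ
  have hlin : swapTrace (∑ i, (p i : ℂ) • (σ i ⊗ₖ τ i))
      = ∑ i, (p i : ℂ) * swapTrace (σ i ⊗ₖ τ i) := by
    simp only [swapTrace, Matrix.sum_apply, Matrix.smul_apply, smul_eq_mul, Finset.mul_sum]
    exact (Finset.sum_congr rfl fun _ _ => Finset.sum_comm).trans Finset.sum_comm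
  rw [hlin]
  refine Finset.sum_nonneg fun i _ => mul_nonneg (by exact_mod_cast hp i) ?_
  rw [swapTrace_kronecker]
  exact (hσ i).1.trace_mul_nonneg (hτ i).1

theorem swapTrace_wernerState (w : ℝ) : swapTrace (wernerState w) = ((1 - 3 * w) / 2 : ℝ) := by
  simp [swapTrace, wernerState, pairToFin4, Fin.sum_univ_two]
  ring

/-- The qubit state `(I + r₀ σₓ + r₁ σ_y + r₂ σ_z) / 2` with Bloch vector `r`. -/
noncomputable def blochState (r : Fin 3 → ℝ) : Matrix (Fin 2) (Fin 2) ℂ :=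
  !![(((1 + r 2) / 2 : ℝ) : ℂ), ⟨r 0 / 2, -(r 1 / 2)⟩; ⟨r 0 / 2, r 1 / 2⟩, (((1 - r 2) / 2 : ℝ) : ℂ)]

theorem blochState_posSemidef {r : Fin 3 → ℝ} (hr : ∑ i, r i ^ 2 ≤ 1) :
    (blochState r).PosSemidef := by
  refine PosSemidef.of_dotProduct_mulVec_nonneg ?_ fun v => ?_
  · ext i j
    fin_cases i <;> fin_cases j <;> simp [blochState, Complex.ext_iff]
  · simp only [Fin.sum_univ_three] at hr
    simp only [dotProduct, Pi.star_apply, RCLike.star_def, mulVec, blochState, Fin.isValue,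
      Complex.ofReal_div, Complex.ofReal_add, Complex.ofReal_one, Complex.ofReal_ofNat,
      Complex.ofReal_sub, of_apply, cons_val', cons_val_fin_one, Fin.sum_univ_two, cons_val_zero,
      cons_val_one, Complex.le_def, Complex.zero_re, Complex.add_re, Complex.mul_re, Complex.conj_re,
      Complex.div_ofNat_re, Complex.one_re, Complex.ofReal_re, Complex.div_ofNat_im, Complex.add_im,
      Complex.one_im, Complex.ofReal_im, add_zero, zero_div, zero_mul, sub_zero, neg_mul,
      sub_neg_eq_add, Complex.conj_im, Complex.mul_im, Complex.sub_re, Complex.sub_im, sub_self,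
      Complex.zero_im]
    refine ⟨?_, by ring⟩
    set x := r 0
    set y := r 1
    set z := r 2
    set u := v 0
    set v := v 1
    have hdet : 0 ≤ (1 + z) / 2 * ((1 - z) / 2) - (x ^ 2 + y ^ 2) / 4 := by linarith
    -- for the form `Q` of `!![a, b; b̄, d]`: `a Q = |a u + b v|² + (a d - |b|²)|v|²`,
    -- `d Q = |d v + b̄ u|² + (a d - |b|²)|u|²`, and here `a + d = 1`
    nlinarith [sq_nonneg ((1 + z) / 2 * u.re + (x * v.re + y * v.im) / 2),
      sq_nonneg ((1 + z) / 2 * u.im + (x * v.im - y * v.re) / 2),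
      sq_nonneg ((1 - z) / 2 * v.re + (x * u.re - y * u.im) / 2),
      sq_nonneg ((1 - z) / 2 * v.im + (x * u.im + y * u.re) / 2),
      mul_nonneg hdet (add_nonneg (sq_nonneg u.re) (sq_nonneg u.im)),
      mul_nonneg hdet (add_nonneg (sq_nonneg v.re) (sq_nonneg v.im))]

theorem blochState_isDensityMatrix {r : Fin 3 → ℝ} (hr : ∑ i, r i ^ 2 ≤ 1) :
    IsDensityMatrix (blochState r) := by
  refine ⟨blochState_posSemidef hr, ?_⟩
  simp [blochState, trace, Fin.sum_univ_two, Complex.ext_iff]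
  ring

def pauliAxis : Fin 6 → Fin 3 → ℝ :=
  ![![1, 0, 0], ![-1, 0, 0], ![0, 1, 0], ![0, -1, 0], ![0, 0, 1], ![0, 0, -1]]

theorem sum_pauliAxis_sq (k : Fin 6) : ∑ i, pauliAxis k i ^ 2 = 1 := by
  fin_cases k <;> simp [pauliAxis, Fin.sum_univ_three]

theorem wernerState_eq_sum_blochState (w : ℝ) :
    wernerState w = ∑ k, ((1 / 6 : ℝ) : ℂ) •
      (blochState (pauliAxis k) ⊗ₖ blochState ((-3 * w) • pauliAxis k)) := by
  ext ⟨a, b⟩ ⟨c, d⟩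
  fin_cases a <;> fin_cases b <;> fin_cases c <;> fin_cases d <;>
  · simp [wernerState, pairToFin4, blochState, pauliAxis, Fin.sum_univ_succ, Complex.ext_iff] <;>
      (try constructor) <;> ring

theorem isSeparableState_wernerState {w : ℝ} (hw : w ∈ Set.Icc (-(1 / 3) : ℝ) (1 / 3)) :
    IsSeparableState (wernerState w) := by
  refine ⟨6, fun _ => 1 / 6, fun k => blochState (pauliAxis k),
    fun k => blochState ((-3 * w) • pauliAxis k), fun _ => by norm_num, by norm_num,
    fun k => blochState_isDensityMatrix (sum_pauliAxis_sq k).le, fun k => ?_,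
    wernerState_eq_sum_blochState w⟩
  apply blochState_isDensityMatrix
  simp only [Pi.smul_apply, smul_eq_mul, mul_pow, ← Finset.mul_sum, sum_pauliAxis_sq, mul_one]
  nlinarith [hw.1, hw.2]

theorem werner_separable_iff (w : ℝ) (hw : w ∈ Set.Icc (-(1 / 3) : ℝ) 1) :
    IsSeparableState (wernerState w) ↔ w ≤ 1 / 3 := by
  refine ⟨fun hsep => ?_, fun hw' => isSeparableState_wernerState ⟨hw.1, hw'⟩⟩
  have hwitness := hsep.swapTrace_nonneg
  rw [swapTrace_wernerState, Complex.zero_le_real] at hwitness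
  linarith
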